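/- If two events e₁ < e₂ of a branching process of A, neither of them an interface event, satisfy M(e₁)ᵢ = M(e₂)ᵢ (same i-predecessor condition) and st(e₁) = st(e₂) (same reached global state), then A has an infinite trace whose projection onto Σᵢ is finite; that is, A is divergent. -/

import Mathlib

open Sum

/-- Nodes `x` and `y` of an occurrence net are in conflict if some condition
can reach both along paths exiting it by different arcs (arcs out of a
condition lead to events). -/
def bpConflict {C E : Type} (F : C ⊕ E → C ⊕ E → Prop) (x y : C ⊕ E) : Prop :=
  ∃ (c : C) (e₁ e₂ : E), e₁ ≠ e₂ ∧ F (inl c) (inr e₁) ∧ F (inl c) (inr e₂) ∧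
    Relation.ReflTransGen F (inr e₁) x ∧ Relation.ReflTransGen F (inr e₂) y

/-- Nodes are concurrent if they are neither causally related nor in conflict. -/
def bpConcurrent {C E : Type} (F : C ⊕ E → C ⊕ E → Prop) (x y : C ⊕ E) : Prop :=
  ¬ Relation.ReflTransGen F x y ∧ ¬ Relation.ReflTransGen F y x ∧ ¬ bpConflict F x y

/-- The past `[e]` of an event: all events `e' ≤ e`. -/
def bpPast {C E : Type} (F : C ⊕ E → C ⊕ E → Prop) (e : E) : Set E :=
  {e' | Relation.ReflTransGen F (inr e') (inr e)}

/-- A condition is initial if it has no input event. -/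
def bpInitial {C E : Type} (F : C ⊕ E → C ⊕ E → Prop) (c : C) : Prop :=
  ¬ ∃ e : E, F (inr e) (inl c)

/-- The cut `M(e)`: conditions produced by (or initial and untouched by) the
past of `e` and not consumed by it. -/
def bpCut {C E : Type} (F : C ⊕ E → C ⊕ E → Prop) (e : E) : Set C :=
  {c | (bpInitial F c ∨ ∃ e' ∈ bpPast F e, F (inr e') (inl c)) ∧
       ∀ e'' ∈ bpPast F e, ¬ F (inl c) (inr e'')}

/-- `e'` is a strong cause of `e` (`e' ≪ e`): `e' < e` and `b' < b` for every
`b ∈ M(e) \ M(e')` and `b' ∈ M(e') \ M(e)`. -/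
def bpSCause {C E : Type} (F : C ⊕ E → C ⊕ E → Prop) (e' e : E) : Prop :=
  Relation.TransGen F (inr e') (inr e) ∧
  ∀ b ∈ bpCut F e, b ∉ bpCut F e' → ∀ b' ∈ bpCut F e', b' ∉ bpCut F e →
    Relation.TransGen F (inl b') (inl b)

/-- A branching process of a parallel composition of LTSs indexed by `ι`:
an occurrence net whose conditions are labelled with components (`comp`),
with one condition per component in the initial cut, and where every event
consumes and produces exactly one condition per participating component. -/
structure BProc (ι C E : Type) where
  F : C ⊕ E → C ⊕ E → Prop
  comp : C → ι
  flow_cc : ∀ c c' : C, ¬ F (inl c) (inl c')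
  flow_ee : ∀ e e' : E, ¬ F (inr e) (inr e')
  cond_pre_unique : ∀ (c : C) (e e' : E), F (inr e) (inl c) → F (inr e') (inl c) → e = e'
  acyclic : ∀ x : C ⊕ E, ¬ Relation.TransGen F x x
  past_finite : ∀ e : E, (bpPast F e).Finite
  pre_nonempty : ∀ e : E, ∃ c : C, F (inl c) (inr e)
  no_self_conflict : ∀ e : E, ¬ bpConflict F (inr e) (inr e)
  pre_comp_inj : ∀ (e : E) (c c' : C),
    F (inl c) (inr e) → F (inl c') (inr e) → comp c = comp c' → c = c'
  post_comp_inj : ∀ (e : E) (c c' : C),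
    F (inr e) (inl c) → F (inr e) (inl c') → comp c = comp c' → c = c'
  pre_post_comp : ∀ (e : E) (c : C),
    F (inl c) (inr e) → ∃ c', F (inr e) (inl c') ∧ comp c' = comp c
  post_pre_comp : ∀ (e : E) (c : C),
    F (inr e) (inl c) → ∃ c', F (inl c') (inr e) ∧ comp c' = comp c
  init_unique : ∀ c c' : C, bpInitial F c → bpInitial F c' → comp c = comp c' → c = c'
  init_exists : ∀ i : ι, ∃ c : C, comp c = i ∧ bpInitial F c

structure LTS (α S : Type) where
  init : S
  step : S → α → S → Prop

def parStep {α ι T : Type} (alph : ι → α → Bool) (A : ι → LTS α T) :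
    (ι → T) → α → (ι → T) → Prop := fun s a s' =>
  ∀ i, (alph i a = true → (A i).step (s i) a (s' i)) ∧ (alph i a = false → s' i = s i)

/-- A branching process of the parallel composition of the LTSs `A j` (with
alphabets `alph j`), with events labelled by actions (`act`) and conditions
labelled by component states (`stc`), together with the selection `Mi e j` of
the unique condition of component `j` in the cut `M(e)`. -/
structure LBProc (ι C E α T : Type) (alph : ι → α → Bool) (A : ι → LTS α T)
    extends BProc ι C E where
  act : E → α
  stc : C → T
  participates_iff : ∀ (e : E) (j : ι),
    alph j (act e) = true ↔ ∃ c, F (inl c) (inr e) ∧ comp c = j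
  step_comp : ∀ (e : E) (c c' : C), F (inl c) (inr e) → F (inr e) (inl c') →
    comp c = comp c' → (A (comp c)).step (stc c) (act e) (stc c')
  init_state : ∀ c : C, bpInitial F c → stc c = (A (comp c)).init
  Mi : E → ι → C
  Mi_mem : ∀ (e : E) (j : ι), Mi e j ∈ bpCut F e
  Mi_comp : ∀ (e : E) (j : ι), comp (Mi e j) = j


/-! Linearize `[e₂]` as a list `L₁ ++ L₂` of events in which `L₁` lists `[e₁]`. Firing the
events of a prefix in order is a run of `A` that reaches the global state of the cut of that
prefix, so `L₁` leads to `st(e₁)` and `L₁ ++ L₂` to `st(e₂) = st(e₁)`: repeating `L₂` forever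
gives an infinite run. No event of `L₂` involves `Aᵢ`: the condition `M(e₁)ᵢ = M(e₂)ᵢ` lies in
every cut between `M(e₁)` and `M(e₂)`, so it would be the `i`-precondition of such an event, yet
no event of `[e₂]` consumes it. -/

open Relation

section Linearization

variable {α : Type*} {r : α → α → Prop}

structure IsLinearization (r : α → α → Prop) (l : List α) : Prop where
  nodup : l.Nodup
  pairwise : l.Pairwise fun a b => ¬ r b a
  down_closed : ∀ x ∈ l, ∀ y, r y x → y ∈ l

theorem IsLinearization.of_append {l₁ l₂ : List α} (h : IsLinearization r (l₁ ++ l₂)) :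
    IsLinearization r l₁ where
  nodup := (List.nodup_append.1 h.nodup).1
  pairwise := (List.pairwise_append.1 h.pairwise).1
  down_closed x hx y hyx := by
    rcases List.mem_append.1 (h.down_closed x (List.mem_append_left _ hx) y hyx) with hy | hy
    · exact hy
    · exact absurd hyx ((List.pairwise_append.1 h.pairwise).2.2 x hx y hy)

theorem IsLinearization.take {l : List α} (h : IsLinearization r l) (k : ℕ) :
    IsLinearization r (l.take k) :=
  (l.take_append_drop k ▸ h).of_append

theorem exists_nodup_pairwise_of_finite [IsStrictOrder α r] {s : Set α} (hs : s.Finite) :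
    ∃ l : List α, l.Nodup ∧ (∀ x, x ∈ l ↔ x ∈ s) ∧ l.Pairwise fun a b => ¬ r b a := by
  classical
  obtain ⟨t, rfl⟩ := hs.exists_finset_coe
  clear hs
  induction t using Finset.strongInduction with
  | H t ih =>
    rcases t.eq_empty_or_nonempty with rfl | ⟨b, hb⟩
    · exact ⟨[], List.nodup_nil, by simp, List.Pairwise.nil⟩
    obtain ⟨⟨a, ha⟩, -, hmin⟩ :=
      (t.finite_toSet.wellFoundedOn (r := r)).has_min Set.univ ⟨⟨b, hb⟩, trivial⟩
    obtain ⟨l, hnd, hmem, hpw⟩ := ih (t.erase a) (Finset.erase_ssubset ha)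
    refine ⟨a :: l, List.nodup_cons.2 ⟨fun h => by simpa using (hmem a).1 h, hnd⟩, ?_, ?_⟩
    · intro x
      by_cases hxa : x = a <;> simp [hxa, hmem, ha]
    · refine List.pairwise_cons.2 ⟨fun x hx hxa => ?_, hpw⟩
      have hx' : x ∈ t := Finset.mem_of_mem_erase (by exact_mod_cast (hmem x).1 hx)
      exact hmin ⟨x, hx'⟩ trivial hxa

theorem exists_isLinearization_append [IsStrictOrder α r] {s₁ s₂ : Set α} (hfin : s₂.Finite)
    (hsub : s₁ ⊆ s₂) (hclosed₁ : ∀ x ∈ s₁, ∀ y, r y x → y ∈ s₁)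
    (hclosed₂ : ∀ x ∈ s₂, ∀ y, r y x → y ∈ s₂) :
    ∃ l₁ l₂ : List α, IsLinearization r (l₁ ++ l₂) ∧ (∀ x, x ∈ l₁ ↔ x ∈ s₁) ∧
      ∀ x, x ∈ l₁ ++ l₂ ↔ x ∈ s₂ := by
  obtain ⟨l₁, hnd₁, hmem₁, hpw₁⟩ := exists_nodup_pairwise_of_finite (r := r) (hfin.subset hsub)
  obtain ⟨l₂, hnd₂, hmem₂, hpw₂⟩ :=
    exists_nodup_pairwise_of_finite (r := r) (hfin.subset (Set.sdiff_subset (t := s₁)))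
  have hmem : ∀ x, x ∈ l₁ ++ l₂ ↔ x ∈ s₂ := fun x => by
    by_cases hx : x ∈ s₁
    · simp [hmem₁, hx, hsub hx]
    · simp [hmem₁, hmem₂, hx]
  refine ⟨l₁, l₂, ⟨?_, ?_, ?_⟩, hmem₁, hmem⟩
  · exact List.nodup_append.2 ⟨hnd₁, hnd₂, fun a ha b hb hab =>
      ((hmem₂ b).1 hb).2 (hab ▸ (hmem₁ a).1 ha)⟩
  · exact List.pairwise_append.2 ⟨hpw₁, hpw₂, fun a ha b hb hba =>
      ((hmem₂ b).1 hb).2 (hclosed₁ a ((hmem₁ a).1 ha) b hba)⟩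
  · exact fun x hx y hyx => (hmem y).2 (hclosed₂ x ((hmem x).1 hx) y hyx)

end Linearization

/-- Position in the finite path `0, …, n` after `k` steps when the step out of `n - 1` jumps
back to `m`. -/
def lassoIndex (m n : ℕ) : ℕ → ℕ
  | 0 => 0
  | k + 1 => if lassoIndex m n k + 1 = n then m else lassoIndex m n k + 1

theorem lassoIndex_lt {m n : ℕ} (h : m < n) : ∀ k, lassoIndex m n k < n
  | 0 => by simp only [lassoIndex]; omega
  | k + 1 => by
    have := lassoIndex_lt h k
    simp only [lassoIndex]
    split_ifs <;> omega

theorem min_le_lassoIndex (m n : ℕ) : ∀ k, min k m ≤ lassoIndex m n k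
  | 0 => by simp [lassoIndex]
  | k + 1 => by
    have := min_le_lassoIndex m n k
    simp only [lassoIndex]
    split_ifs <;> omega

theorem exists_lasso_run {S β : Type*} (R : S → β → S → Prop) {σ : ℕ → S} {a : ℕ → β}
    {m n : ℕ} (hmn : m < n) (hstep : ∀ k < n, R (σ k) (a k) (σ (k + 1))) (hloop : σ n = σ m) :
    ∃ (ρ : ℕ → S) (w : ℕ → β), ρ 0 = σ 0 ∧ (∀ k, R (ρ k) (w k) (ρ (k + 1))) ∧
      ∀ k, m ≤ k → w k ∈ a '' Set.Ico m n := by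
  refine ⟨σ ∘ lassoIndex m n, a ∘ lassoIndex m n, rfl, fun k => ?_, fun k hk => ?_⟩
  · have hnext : σ (lassoIndex m n (k + 1)) = σ (lassoIndex m n k + 1) := by
      simp only [lassoIndex]
      split_ifs with h
      · rw [h, hloop]
      · rfl
    simpa only [Function.comp, hnext] using hstep _ (lassoIndex_lt hmn k)
  · have := min_le_lassoIndex m n k
    exact ⟨lassoIndex m n k, ⟨by omega, lassoIndex_lt hmn k⟩, rfl⟩

section Cut

variable {C E : Type} {F : C ⊕ E → C ⊕ E → Prop} {S S₁ S₂ : Set E} {e : E} {c : C}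

variable (F) in
/-- `bpCut F e` unfolds to `cutOf F (bpPast F e)`. -/
def cutOf (S : Set E) : Set C :=
  {c | (bpInitial F c ∨ ∃ e ∈ S, F (inr e) (inl c)) ∧ ∀ e ∈ S, ¬ F (inl c) (inr e)}

theorem mem_cutOf_of_subset (h₁ : S₁ ⊆ S) (h₂ : S ⊆ S₂) (hc₁ : c ∈ cutOf F S₁)
    (hc₂ : c ∈ cutOf F S₂) : c ∈ cutOf F S :=
  ⟨hc₁.1.imp_right fun ⟨e, he, hf⟩ => ⟨e, h₁ he, hf⟩, fun e he => hc₂.2 e (h₂ he)⟩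

theorem mem_cutOf_of_mem_cutOf_insert (hpost : ¬ F (inr e) (inl c))
    (hc : c ∈ cutOf F (insert e S)) : c ∈ cutOf F S := by
  refine ⟨hc.1.imp_right fun ⟨e', he', hf⟩ => ⟨e', ?_, hf⟩, fun e' he' => hc.2 e' (.inr he')⟩
  rcases he' with rfl | he'
  · exact absurd hf hpost
  · exact he'

theorem mem_cutOf_insert_iff (hpre : ¬ F (inl c) (inr e)) (hpost : ¬ F (inr e) (inl c)) :
    c ∈ cutOf F (insert e S) ↔ c ∈ cutOf F S := by
  refine ⟨mem_cutOf_of_mem_cutOf_insert hpost, fun hc => ⟨?_, ?_⟩⟩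
  · exact hc.1.imp_right fun ⟨e', he', hf⟩ => ⟨e', .inr he', hf⟩
  · rintro e' (rfl | he')
    · exact hpre
    · exact hc.2 e' he'

end Cut

namespace BProc

variable {ι C E : Type} (N : BProc ι C E)

def Precedes (e e' : E) : Prop := TransGen N.F (inr e) (inr e')

instance : IsStrictOrder E N.Precedes where
  irrefl e := N.acyclic (inr e)
  trans _ _ _ := TransGen.trans

theorem mem_bpPast_of_precedes {e x y : E} (hx : x ∈ bpPast N.F e) (hyx : N.Precedes y x) :
    y ∈ bpPast N.F e :=
  hyx.to_reflTransGen.trans hx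

theorem exists_isLinearization_bpPast {e₁ e₂ : E} (h : N.Precedes e₁ e₂) :
    ∃ L₁ L₂ : List E, IsLinearization N.Precedes (L₁ ++ L₂) ∧
      (∀ x, x ∈ L₁ ↔ x ∈ bpPast N.F e₁) ∧ (∀ x, x ∈ L₁ ++ L₂ ↔ x ∈ bpPast N.F e₂) ∧ L₂ ≠ [] := by
  obtain ⟨L₁, L₂, hL, hmem₁, hmem⟩ := exists_isLinearization_append (r := N.Precedes)
    (N.past_finite e₂) (fun x hx => hx.trans h.to_reflTransGen)
    (fun _ hx _ => N.mem_bpPast_of_precedes hx) (fun _ hx _ => N.mem_bpPast_of_precedes hx)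
  refine ⟨L₁, L₂, hL, hmem₁, hmem, List.ne_nil_of_mem (a := e₂) ?_⟩
  exact (List.mem_append.1 ((hmem e₂).2 .refl)).resolve_left
    fun h₁ => N.acyclic (inr e₂) (TransGen.trans_right ((hmem₁ e₂).1 h₁) h)

def IsCut (S : Set E) (m : ι → C) : Prop :=
  ∀ j d, d ∈ cutOf N.F S ∧ N.comp d = j ↔ d = m j

structure Appendable (S : Set E) (e : E) : Prop where
  not_mem : e ∉ S
  pred_mem : ∀ y, N.Precedes y e → y ∈ S
  not_precedes : ∀ x ∈ S, ¬ N.Precedes e x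
  no_conflict : ∀ x ∈ S, ∀ c, N.F (inl c) (inr x) → ¬ N.F (inl c) (inr e)

theorem appendable_of_isLinearization {l : List E} {e e₀ : E}
    (hl : IsLinearization N.Precedes (l ++ [e])) (hsub : ∀ x ∈ l ++ [e], x ∈ bpPast N.F e₀) :
    N.Appendable {x | x ∈ l} e := by
  have hnd := List.nodup_append.1 hl.nodup
  have hnot : e ∉ l := fun he => hnd.2.2 e he e (List.mem_singleton_self e) rfl
  refine ⟨hnot, fun y hye => ?_, fun x hx hex => ?_, fun x hx c hcx hce => ?_⟩
  · rcases List.mem_append.1 (hl.down_closed e (by simp) y hye) with hy | hy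
    · exact hy
    · exact absurd (List.mem_singleton.1 hy ▸ hye) (irrefl e)
  · exact (List.pairwise_append.1 hl.pairwise).2.2 x hx e (List.mem_singleton_self e) hex
  · refine N.no_self_conflict e₀ ⟨c, x, e, fun hxe => hnot (hxe ▸ hx), hcx, hce, ?_, ?_⟩
    · exact hsub x (List.mem_append_left _ hx)
    · exact hsub e (by simp)

noncomputable def initCond (j : ι) : C := (N.init_exists j).choose

theorem comp_initCond (j : ι) : N.comp (N.initCond j) = j := (N.init_exists j).choose_spec.1

theorem initial_initCond (j : ι) : bpInitial N.F (N.initCond j) :=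
  (N.init_exists j).choose_spec.2

theorem isCut_empty : N.IsCut ∅ N.initCond := by
  intro j d
  simp only [cutOf, Set.mem_empty_iff_false, false_and, exists_false, or_false,
    IsEmpty.forall_iff, implies_true, and_true]
  refine ⟨fun ⟨hd, hdj⟩ => N.init_unique _ _ hd (N.initial_initCond j) ?_, ?_⟩
  · rw [hdj, comp_initCond]
  · rintro rfl
    exact ⟨N.initial_initCond j, N.comp_initCond j⟩

end BProc

namespace LBProc

variable {ι C E α T : Type} {alph : ι → α → Bool} {A : ι → LTS α T}
  (N : LBProc ι C E α T alph A) {S : Set E} {e : E} {m : ι → C}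

theorem participates_of_pre {c : C} (h : N.F (inl c) (inr e)) :
    alph (N.comp c) (N.act e) = true :=
  (N.participates_iff e _).2 ⟨c, h, rfl⟩

theorem participates_of_post {c : C} (h : N.F (inr e) (inl c)) :
    alph (N.comp c) (N.act e) = true := by
  obtain ⟨c', hc', hcomp⟩ := N.post_pre_comp e c h
  exact (N.participates_iff e _).2 ⟨c', hc', hcomp⟩

theorem stc_initCond (j : ι) : N.stc (N.initCond j) = (A j).init := by
  rw [N.init_state _ (N.initial_initCond j), N.comp_initCond]

noncomputable def preCond (e : E) (j : ι) (h : alph j (N.act e) = true) : C :=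
  ((N.participates_iff e j).1 h).choose

theorem flow_preCond (j : ι) (h : alph j (N.act e) = true) :
    N.F (inl (N.preCond e j h)) (inr e) :=
  ((N.participates_iff e j).1 h).choose_spec.1

theorem comp_preCond (j : ι) (h : alph j (N.act e) = true) : N.comp (N.preCond e j h) = j :=
  ((N.participates_iff e j).1 h).choose_spec.2

noncomputable def postCond (e : E) (j : ι) (h : alph j (N.act e) = true) : C :=
  (N.pre_post_comp e _ (N.flow_preCond j h)).choose

theorem flow_postCond (j : ι) (h : alph j (N.act e) = true) :
    N.F (inr e) (inl (N.postCond e j h)) :=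
  (N.pre_post_comp e _ (N.flow_preCond j h)).choose_spec.1

theorem comp_postCond (j : ι) (h : alph j (N.act e) = true) : N.comp (N.postCond e j h) = j :=
  (N.pre_post_comp e _ (N.flow_preCond j h)).choose_spec.2.trans (N.comp_preCond j h)

noncomputable def fire (m : ι → C) (e : E) : ι → C := fun j =>
  if h : alph j (N.act e) = true then N.postCond e j h else m j

noncomputable def marking (l : List E) : ι → C := l.foldl N.fire N.initCond

theorem preCond_mem_cutOf (he : N.Appendable S e) (j : ι) (h : alph j (N.act e) = true) :
    N.preCond e j h ∈ cutOf N.F S := by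
  refine ⟨(em _).imp_right fun hni => ?_, fun x hx hf => he.no_conflict x hx _ hf
    (N.flow_preCond j h)⟩
  obtain ⟨e', hf⟩ := not_not.1 hni
  exact ⟨e', he.pred_mem e' (.head hf (.single (N.flow_preCond j h))), hf⟩

theorem preCond_eq (hm : N.IsCut S m) (he : N.Appendable S e) (j : ι)
    (h : alph j (N.act e) = true) : N.preCond e j h = m j :=
  (hm j _).1 ⟨N.preCond_mem_cutOf he j h, N.comp_preCond j h⟩

theorem postCond_mem_cutOf_insert (he : N.Appendable S e) (j : ι)
    (h : alph j (N.act e) = true) : N.postCond e j h ∈ cutOf N.F (insert e S) := by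
  have hcause : ∀ x, N.F (inl (N.postCond e j h)) (inr x) → N.Precedes e x :=
    fun x hf => .head (N.flow_postCond j h) (.single hf)
  refine ⟨.inr ⟨e, Set.mem_insert e S, N.flow_postCond j h⟩, ?_⟩
  rintro x (rfl | hx) hf
  · exact irrefl x (hcause x hf)
  · exact he.not_precedes x hx (hcause x hf)

theorem isCut_fire (hm : N.IsCut S m) (he : N.Appendable S e) :
    N.IsCut (insert e S) (N.fire m e) := by
  intro j d
  unfold fire
  split_ifs with h
  · refine ⟨fun ⟨hd, hdj⟩ => ?_, ?_⟩
    · by_cases hpost : N.F (inr e) (inl d)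
      · exact N.post_comp_inj e _ _ hpost (N.flow_postCond j h) (by rw [hdj, comp_postCond])
      -- otherwise `d` was already current, so it is the condition of `j` consumed by `e`
      have hd' : d = N.preCond e j h :=
        ((hm j d).1 ⟨mem_cutOf_of_mem_cutOf_insert hpost hd, hdj⟩).trans
          (N.preCond_eq hm he j h).symm
      exact absurd (hd' ▸ N.flow_preCond j h) (hd.2 e (Set.mem_insert e S))
    · rintro rfl
      exact ⟨N.postCond_mem_cutOf_insert he j h, N.comp_postCond j h⟩
  · rw [← hm j d]
    refine and_congr_left fun hdj => mem_cutOf_insert_iff ?_ ?_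
    · exact fun hf => h (hdj ▸ N.participates_of_pre hf)
    · exact fun hf => h (hdj ▸ N.participates_of_post hf)

theorem parStep_fire (hm : N.IsCut S m) (he : N.Appendable S e) :
    parStep alph A (fun j => N.stc (m j)) (N.act e) (fun j => N.stc (N.fire m e j)) := by
  intro j
  refine ⟨fun h => ?_, fun h => by simp [fire, h]⟩
  have hstep := N.step_comp e _ _ (N.flow_preCond j h) (N.flow_postCond j h)
    ((N.comp_preCond j h).trans (N.comp_postCond j h).symm)
  rw [N.comp_preCond, N.preCond_eq hm he] at hstep
  simpa [fire, h] using hstep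

theorem participates_eq_false (hm : N.IsCut S m) (he : N.Appendable S e) {c : C}
    (hc : c ∈ cutOf N.F S) (hce : ¬ N.F (inl c) (inr e)) :
    alph (N.comp c) (N.act e) = false := by
  refine Bool.eq_false_iff.2 fun h => hce ?_
  have hpre : N.preCond e _ h = c :=
    (N.preCond_eq hm he _ h).trans ((hm _ c).1 ⟨hc, rfl⟩).symm
  exact hpre ▸ N.flow_preCond _ h

theorem marking_append_singleton (l : List E) (e : E) :
    N.marking (l ++ [e]) = N.fire (N.marking l) e := by
  simp [marking]

variable {l : List E} {e₀ : E}

theorem isCut_marking (hl : IsLinearization N.Precedes l)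
    (hsub : ∀ x ∈ l, x ∈ bpPast N.F e₀) : N.IsCut {x | x ∈ l} (N.marking l) := by
  induction l using List.reverseRecOn with
  | nil => simpa [marking] using N.isCut_empty
  | append_singleton l e ih =>
    have hset : {x | x ∈ l ++ [e]} = insert e {x | x ∈ l} := by
      ext x
      simp [or_comm]
    rw [hset, marking_append_singleton]
    exact N.isCut_fire (ih hl.of_append fun x hx => hsub x (List.mem_append_left _ hx))
      (N.appendable_of_isLinearization hl hsub)

theorem marking_eq_Mi (hl : IsLinearization N.Precedes l)
    (hmem : ∀ x, x ∈ l ↔ x ∈ bpPast N.F e₀) : N.marking l = N.Mi e₀ := by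
  have hcut := N.isCut_marking hl fun x => (hmem x).1
  rw [show {x | x ∈ l} = bpPast N.F e₀ from Set.ext hmem] at hcut
  exact funext fun j => ((hcut j _).1 ⟨N.Mi_mem e₀ j, N.Mi_comp e₀ j⟩).symm

theorem appendable_take (hl : IsLinearization N.Precedes l)
    (hsub : ∀ x ∈ l, x ∈ bpPast N.F e₀) {k : ℕ} (hk : k < l.length) :
    N.Appendable {x | x ∈ l.take k} l[k] := by
  refine N.appendable_of_isLinearization ?_ fun x hx => hsub x ?_
  · exact l.take_concat_get' k hk ▸ hl.take (k + 1)
  · exact List.mem_of_mem_take (l.take_concat_get' k hk ▸ hx)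

theorem parStep_marking_take (hl : IsLinearization N.Precedes l)
    (hsub : ∀ x ∈ l, x ∈ bpPast N.F e₀) {k : ℕ} (hk : k < l.length) :
    parStep alph A (fun j => N.stc (N.marking (l.take k) j)) (N.act l[k])
      (fun j => N.stc (N.marking (l.take (k + 1)) j)) := by
  rw [← l.take_concat_get' k hk, marking_append_singleton]
  exact N.parStep_fire (N.isCut_marking (hl.take k) fun x hx => hsub x (List.mem_of_mem_take hx))
    (N.appendable_take hl hsub hk)

theorem participates_eq_false_of_mem_bpCut (hl : IsLinearization N.Precedes l)
    (hsub : ∀ x ∈ l, x ∈ bpPast N.F e₀) {k : ℕ} (hk : k < l.length) {c : C}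
    (hc : c ∈ cutOf N.F {x | x ∈ l.take k}) (hc₀ : c ∈ bpCut N.F e₀) :
    alph (N.comp c) (N.act l[k]) = false :=
  N.participates_eq_false (N.isCut_marking (hl.take k) fun x hx => hsub x (List.mem_of_mem_take hx))
    (N.appendable_take hl hsub hk) hc (hc₀.2 _ (hsub _ (List.getElem_mem hk)))

end LBProc

theorem repeated_state_implies_divergent_general
    {ι C E α T : Type} (alph : ι → α → Bool) (A : ι → LTS α T) (i : ι)
    (N : LBProc ι C E α T alph A)
    (e₁ e₂ : E) (hlt : Relation.TransGen N.F (inr e₁) (inr e₂))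
    (hMi : N.Mi e₁ i = N.Mi e₂ i)
    (hst : ∀ j, N.stc (N.Mi e₁ j) = N.stc (N.Mi e₂ j)) :
    ∃ (ρ : ℕ → ι → T) (w : ℕ → α),
      ρ 0 = (fun j => (A j).init) ∧
      (∀ k, parStep alph A (ρ k) (w k) (ρ (k + 1))) ∧
      {k | alph i (w k) = true}.Finite := by
  obtain ⟨L₁, L₂, hL, hmem₁, hmem, hL₂⟩ := N.exists_isLinearization_bpPast hlt
  set L := L₁ ++ L₂
  have hsub : ∀ x ∈ L, x ∈ bpPast N.F e₂ := fun x => (hmem x).1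
  -- `M(e₁)ᵢ = M(e₂)ᵢ` stays current while `[e₂] \ [e₁]` is executed
  have hquiet : ∀ k (hk : k < L.length), L₁.length ≤ k → alph i (N.act L[k]) = false := by
    intro k hk hk₁
    have hc : N.Mi e₁ i ∈ cutOf N.F {x | x ∈ L.take k} := by
      refine mem_cutOf_of_subset (fun x hx => ?_) (fun x hx => hsub x (List.mem_of_mem_take hx))
        (N.Mi_mem e₁ i) (hMi ▸ N.Mi_mem e₂ i)
      rw [List.take_append, List.take_of_length_le hk₁]
      exact List.mem_append_left _ ((hmem₁ x).2 hx)
    simpa only [N.Mi_comp] using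
      N.participates_eq_false_of_mem_bpCut hL hsub hk hc (hMi ▸ N.Mi_mem e₂ i)
  obtain ⟨ρ, w, hρ₀, hρ, hw⟩ := exists_lasso_run (parStep alph A)
    (σ := fun k j => N.stc (N.marking (L.take k) j)) (a := fun k => N.act (L.getD k e₂))
    (m := L₁.length) (n := L.length) (by simpa [L] using List.length_pos_iff.2 hL₂)
    (fun k hk => L.getD_eq_getElem e₂ hk ▸ N.parStep_marking_take hL hsub hk)
    (by
      rw [List.take_length, List.take_left, N.marking_eq_Mi hL hmem,
        N.marking_eq_Mi hL.of_append hmem₁]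
      exact funext fun j => (hst j).symm)
  refine ⟨ρ, w, hρ₀.trans (funext fun j => ?_), hρ, (Set.finite_Iio L₁.length).subset ?_⟩
  · simp [LBProc.marking, N.stc_initCond]
  · intro k hk
    by_contra hk₁
    obtain ⟨k', ⟨hk'₁, hk'⟩, hwk⟩ := hw k (not_lt.1 hk₁)
    simp [← hwk, List.getElem?_eq_getElem hk', hquiet k' hk' hk'₁] at hk

/-- if two events `e₁ < e₂` of a branching process of `A`,
neither of them an interface event, have the same `i`-predecessor condition
`M(e₁)ᵢ = M(e₂)ᵢ` and reach the same global state `st(e₁) = st(e₂)`, then `A`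
is divergent: it has an infinite trace whose projection onto `Σᵢ` is finite. -/
theorem repeated_state_implies_divergent
    {ι C E α T : Type} [Finite ι] (alph : ι → α → Bool) (A : ι → LTS α T) (i : ι)
    (N : LBProc ι C E α T alph A)
    (e₁ e₂ : E) (hlt : Relation.TransGen N.F (inr e₁) (inr e₂))
    (hni₁ : alph i (N.act e₁) = false) (hni₂ : alph i (N.act e₂) = false)
    (hMi : N.Mi e₁ i = N.Mi e₂ i)
    (hst : ∀ j, N.stc (N.Mi e₁ j) = N.stc (N.Mi e₂ j)) :
    ∃ (ρ : ℕ → ι → T) (w : ℕ → α),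
      ρ 0 = (fun j => (A j).init) ∧
      (∀ k, parStep alph A (ρ k) (w k) (ρ (k + 1))) ∧
      {k | alph i (w k) = true}.Finite :=
  repeated_state_implies_divergent_general alph A i N e₁ e₂ hlt hMi hst
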